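/- arXiv:1609.00517 — 4 statements merged into one kernel-verified Lean document; each statement's English description precedes it below -/
import Mathlib

section
/- If a positive-valued double sequence a(m,n) indexed by positive integers is superadditive in each index separately (i.e., a(m1+m2,n) ≥ a(m1,n)+a(m2,n) and a(m,n1+n2) ≥ a(m,n1)+a(m,n2)), and if sup_n a(n,n)/n² exists (is finite), then lim_{n→∞} a(n,n)/n² exists and equals sup_n a(n,n)/n². -/
/-! Fix `N`. For `n ≥ N` put `q = ⌊n / N⌋`. Monotonicity and superadditivity in each index
give `a(n,n) ≥ a(qN,qN) ≥ q² a(N,N)`, and `qN > n - N`, so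
`a(n,n)/n² ≥ (1 - N/n)² · a(N,N)/N²`.
Letting `n → ∞`, every value `a(N,N)/N²` is a lower bound for `liminf a(n,n)/n²`, hence so is
their supremum, which trivially bounds `a(n,n)/n²` from above. -/

open Filter Topology

theorem tendsto_ciSup_of_forall_lt_eventually_lt {ι α : Type*} [Nonempty ι]
    [ConditionallyCompleteLinearOrder α] [TopologicalSpace α] [OrderTopology α]
    {l : Filter ι} {u : ι → α} (hbdd : BddAbove (Set.range u))
    (h : ∀ i, ∀ c < u i, ∀ᶠ n in l, c < u n) : Tendsto u l (𝓝 (⨆ i, u i)) := by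
  refine tendsto_order.2 ⟨fun c hc => ?_, fun c hc => ?_⟩
  · obtain ⟨i, hi⟩ := exists_lt_of_lt_ciSup hc
    exact h i c hi
  · exact Eventually.of_forall fun n => (le_ciSup hbdd n).trans_lt hc

namespace PNat

section Superadditive

variable {M : Type*} [AddCommMonoid M] [PartialOrder M] [IsOrderedAddMonoid M]

theorem monotone_of_superadditive {g : ℕ+ → M} (hg : ∀ m n, g m + g n ≤ g (m + n))
    (hnonneg : ∀ n, 0 ≤ g n) : Monotone g := by
  intro m n hmn
  rcases hmn.eq_or_lt with rfl | hlt
  · exact le_rfl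
  · calc g m ≤ g m + g (n - m) := le_add_of_nonneg_right (hnonneg _)
      _ ≤ g (m + (n - m)) := hg _ _
      _ = g n := by rw [PNat.add_sub_of_lt hlt]

theorem nsmul_le_mul_of_superadditive {g : ℕ+ → M} (hg : ∀ m n, g m + g n ≤ g (m + n))
    (q N : ℕ+) : (q : ℕ) • g N ≤ g (q * N) := by
  induction q using PNat.recOn with
  | one => simp
  | succ q ih =>
    calc ((q + 1 : ℕ+) : ℕ) • g N = (q : ℕ) • g N + g N := by simp [add_nsmul]
      _ ≤ g (q * N) + g N := add_le_add_left ih _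
      _ ≤ g (q * N + N) := hg _ _
      _ = g ((q + 1) * N) := by rw [add_mul, one_mul]

theorem sq_nsmul_le_diag_of_superadditive {a : ℕ+ × ℕ+ → M}
    (hnonneg : ∀ m n, 0 ≤ a (m, n))
    (hsup1 : ∀ m₁ m₂ n, a (m₁, n) + a (m₂, n) ≤ a (m₁ + m₂, n))
    (hsup2 : ∀ m n₁ n₂, a (m, n₁) + a (m, n₂) ≤ a (m, n₁ + n₂))
    {q N n : ℕ+} (hn : q * N ≤ n) : ((q : ℕ) ^ 2) • a (N, N) ≤ a (n, n) :=
  calc ((q : ℕ) ^ 2) • a (N, N)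
      = (q : ℕ) • ((q : ℕ) • a (N, N)) := by rw [sq, mul_nsmul]
    _ ≤ (q : ℕ) • a (N, q * N) :=
      nsmul_le_nsmul_right (nsmul_le_mul_of_superadditive (hsup2 N) q N) _
    _ ≤ a (q * N, q * N) := nsmul_le_mul_of_superadditive (fun m₁ m₂ => hsup1 m₁ m₂ _) q N
    _ ≤ a (q * N, n) := monotone_of_superadditive (hsup2 _) (hnonneg _) hn
    _ ≤ a (n, n) :=
      monotone_of_superadditive (fun m₁ m₂ => hsup1 m₁ m₂ n) (hnonneg · n) hn

end Superadditive

theorem one_sub_div_sq_mul_le_diag_div_sq {a : ℕ+ × ℕ+ → ℝ}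
    (hnonneg : ∀ m n, 0 ≤ a (m, n))
    (hsup1 : ∀ m₁ m₂ n, a (m₁, n) + a (m₂, n) ≤ a (m₁ + m₂, n))
    (hsup2 : ∀ m n₁ n₂, a (m, n₁) + a (m, n₂) ≤ a (m, n₁ + n₂))
    {N n : ℕ+} (hn : N ≤ n) :
    (1 - (N : ℝ) / n) ^ 2 * (a (N, N) / (N : ℝ) ^ 2) ≤ a (n, n) / (n : ℝ) ^ 2 := by
  set q : ℕ+ := ⟨n / N, Nat.div_pos hn N.pos⟩
  have hqN : q * N ≤ n := Nat.div_mul_le_self (n : ℕ) N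
  have hn_lt : (n : ℝ) < q * N + N := by exact_mod_cast Nat.lt_div_mul_add (a := n) N.pos
  have hn_pos : (0 : ℝ) < n := Nat.cast_pos.2 n.pos
  have hbase : 0 ≤ 1 - (N : ℝ) / n :=
    sub_nonneg.2 ((div_le_one hn_pos).2 (by exact_mod_cast hn))
  have hlower : 1 - (N : ℝ) / n ≤ q * N / n := by
    rw [one_sub_div hn_pos.ne', div_le_div_iff_of_pos_right hn_pos]
    linarith
  calc (1 - (N : ℝ) / n) ^ 2 * (a (N, N) / (N : ℝ) ^ 2)
      ≤ (q * N / n : ℝ) ^ 2 * (a (N, N) / (N : ℝ) ^ 2) := by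
        have := hnonneg N N
        gcongr
    _ = ((q : ℕ) ^ 2 • a (N, N)) / (n : ℝ) ^ 2 := by
        rw [nsmul_eq_mul]
        push_cast
        field_simp
    _ ≤ a (n, n) / (n : ℝ) ^ 2 := by
        gcongr
        exact sq_nsmul_le_diag_of_superadditive hnonneg hsup1 hsup2 hqN

end PNat

/-- Two-variable Fekete lemma: a positive double sequence, superadditive in each
index separately, with bounded `a(n,n)/n²`, satisfies
`lim a(n,n)/n² = sup a(n,n)/n²`. -/
theorem two_variable_fekete (a : ℕ+ × ℕ+ → ℝ)
    (hpos : ∀ m n : ℕ+, 0 < a (m, n))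
    (hsup1 : ∀ m₁ m₂ n : ℕ+, a (m₁, n) + a (m₂, n) ≤ a (m₁ + m₂, n))
    (hsup2 : ∀ m n₁ n₂ : ℕ+, a (m, n₁) + a (m, n₂) ≤ a (m, n₁ + n₂))
    (hbdd : BddAbove (Set.range fun n : ℕ+ => a (n, n) / (n : ℝ) ^ 2)) :
    Filter.Tendsto (fun n : ℕ+ => a (n, n) / (n : ℝ) ^ 2) Filter.atTop
      (nhds (⨆ n : ℕ+, a (n, n) / (n : ℝ) ^ 2)) := by
  refine tendsto_ciSup_of_forall_lt_eventually_lt hbdd fun N c hc => ?_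
  have hN_div : Tendsto (fun n : ℕ+ => (N : ℝ) / n) atTop (𝓝 0) :=
    tendsto_const_nhds.div_atTop (tendsto_natCast_atTop_atTop.comp tendsto_PNat_val_atTop_atTop)
  have hlim : Tendsto (fun n : ℕ+ => (1 - (N : ℝ) / n) ^ 2 * (a (N, N) / (N : ℝ) ^ 2)) atTop
      (𝓝 (a (N, N) / (N : ℝ) ^ 2)) := by
    simpa using (((tendsto_const_nhds (x := (1 : ℝ))).sub hN_div).pow 2).mul_const
      (a (N, N) / (N : ℝ) ^ 2)
  filter_upwards [hlim.eventually (eventually_gt_nhds hc), eventually_ge_atTop N] with n hcn hn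
  exact hcn.trans_le <|
    PNat.one_sub_div_sq_mul_le_diag_div_sq (fun m n => (hpos m n).le) hsup1 hsup2 hn
end

section
/- If a positive-valued double sequence a(m,n) is superadditive in each index, then for any k ≥ 1 and any n > k, writing n = p·k + q with 0 ≤ q < k by the division algorithm, one has a(n,n) ≥ p²·a(k,k) + p·a(k,q) + p·a(q,k) + a(q,q) (where terms with q = 0 are omitted). -/
/-!
Superadditivity in each index gives `a(m₁ + m₂, n₁ + n₂) ≥ a(m₁, n₁) + a(m₁, n₂) + a(m₂, n₁) + a(m₂, n₂)`
and, by iterating, `a(p m, p' n) ≥ p p' a(m, n)`. Splitting both indices of `a(n, n)` as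
`n = p k + q` and bounding the four blocks in this way gives the inequality.
-/

namespace PNat

theorem natCast_mul_le_of_superadditive {f : ℕ+ → ℝ} (hf : ∀ m n, f m + f n ≤ f (m + n))
    (p m : ℕ+) : (p : ℝ) * f m ≤ f (p * m) := by
  induction p using PNat.recOn with
  | one => simp
  | succ p ih =>
    calc ((p + 1 : ℕ+) : ℝ) * f m = f m + p * f m := by push_cast; ring
      _ ≤ f m + f (p * m) := by gcongr
      _ ≤ f (m + p * m) := hf m (p * m)
      _ = f ((p + 1) * m) := by rw [add_mul, one_mul, add_comm]

section Superadditive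

variable {a : ℕ+ × ℕ+ → ℝ}
  (hsup1 : ∀ m₁ m₂ n : ℕ+, a (m₁, n) + a (m₂, n) ≤ a (m₁ + m₂, n))
  (hsup2 : ∀ m n₁ n₂ : ℕ+, a (m, n₁) + a (m, n₂) ≤ a (m, n₁ + n₂))
include hsup1 hsup2

theorem add_add_add_le_of_superadditive (m₁ m₂ n₁ n₂ : ℕ+) :
    a (m₁, n₁) + a (m₁, n₂) + a (m₂, n₁) + a (m₂, n₂) ≤ a (m₁ + m₂, n₁ + n₂) := by
  linarith [hsup1 m₁ m₂ (n₁ + n₂), hsup2 m₁ n₁ n₂, hsup2 m₂ n₁ n₂]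

theorem mul_mul_le_of_superadditive (p p' m n : ℕ+) :
    (p : ℝ) * p' * a (m, n) ≤ a (p * m, p' * n) := by
  calc (p : ℝ) * p' * a (m, n) = p * (p' * a (m, n)) := mul_assoc _ _ _
    _ ≤ p * a (m, p' * n) := by
        gcongr; exact natCast_mul_le_of_superadditive (hsup2 m) p' n
    _ ≤ a (p * m, p' * n) := natCast_mul_le_of_superadditive (hsup1 · · _) p m

end Superadditive

end PNat

open PNat in
theorem fekete_key_inequality_general (a : ℕ+ × ℕ+ → ℝ)
    (hsup1 : ∀ m₁ m₂ n : ℕ+, a (m₁, n) + a (m₂, n) ≤ a (m₁ + m₂, n))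
    (hsup2 : ∀ m n₁ n₂ : ℕ+, a (m, n₁) + a (m, n₂) ≤ a (m, n₁ + n₂))
    (k n : ℕ+) (p q : ℕ) (hdiv : (n : ℕ) = p * k + q) :
    if hq0 : 0 < q then
      (p : ℝ) ^ 2 * a (k, k) + p * a (k, ⟨q, hq0⟩) + p * a (⟨q, hq0⟩, k)
        + a (⟨q, hq0⟩, ⟨q, hq0⟩) ≤ a (n, n)
    else (p : ℝ) ^ 2 * a (k, k) ≤ a (n, n) := by
  obtain rfl | hp := p.eq_zero_or_pos
  · have hq0 : 0 < q := by simpa [hdiv] using n.pos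
    obtain rfl : n = ⟨q, hq0⟩ := PNat.eq (by simpa using hdiv)
    simp [hq0]
  set P : ℕ+ := ⟨p, hp⟩
  have hkk := mul_mul_le_of_superadditive hsup1 hsup2 P P k k
  split_ifs with hq0
  · set Q : ℕ+ := ⟨q, hq0⟩
    obtain rfl : n = P * k + Q := PNat.eq (by rw [hdiv, PNat.add_coe, PNat.mul_coe]; rfl)
    have hblocks := add_add_add_le_of_superadditive hsup1 hsup2 (P * k) Q (P * k) Q
    have hkq := natCast_mul_le_of_superadditive (hsup1 · · Q) P k
    have hqk := natCast_mul_le_of_superadditive (hsup2 Q) P k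
    simp only [P, PNat.mk_coe] at hkk hkq hqk
    linarith
  · obtain rfl : n = P * k := PNat.eq (by rw [hdiv, PNat.mul_coe, Nat.eq_zero_of_not_pos hq0]; rfl)
    simpa [P, sq] using hkk

/-- Key inequality in the proof of the two-variable Fekete lemma: for `n = p·k + q`
with `0 ≤ q < k`, one has `a(n,n) ≥ p²·a(k,k) + p·a(k,q) + p·a(q,k) + a(q,q)`,
where the terms involving `q` are omitted when `q = 0`. -/
theorem fekete_key_inequality (a : ℕ+ × ℕ+ → ℝ)
    (hpos : ∀ m n : ℕ+, 0 < a (m, n))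
    (hsup1 : ∀ m₁ m₂ n : ℕ+, a (m₁, n) + a (m₂, n) ≤ a (m₁ + m₂, n))
    (hsup2 : ∀ m n₁ n₂ : ℕ+, a (m, n₁) + a (m, n₂) ≤ a (m, n₁ + n₂))
    (k n : ℕ+) (hkn : k < n) (p q : ℕ) (hq : q < k) (hdiv : (n : ℕ) = p * k + q) :
    if hq0 : 0 < q then
      (p : ℝ) ^ 2 * a (k, k) + p * a (k, ⟨q, hq0⟩) + p * a (⟨q, hq0⟩, k)
        + a (⟨q, hq0⟩, ⟨q, hq0⟩) ≤ a (n, n)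
    else (p : ℝ) ^ 2 * a (k, k) ≤ a (n, n) :=
  fekete_key_inequality_general a hsup1 hsup2 k n p q hdiv
end

section
/- If a double sequence D(m,n) of positive reals is supermultiplicative in each index (D(m1+m2,n) ≥ D(m1,n)·D(m2,n) and D(m,n1+n2) ≥ D(m,n1)·D(m,n2)) and D(n,n)^{1/n²} is bounded above, then lim_{n→∞} D(n,n)^{1/n²} exists and equals sup_n D(n,n)^{1/n²}. -/
/-!
Extend `log D` by zero to `ℕ × ℕ`; the extension `F` is still superadditive in each variable.
Writing `n = q m + r` with `r < m`, superadditivity in the second and then in the first variable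
gives `F(n,n) ≥ q² F(m,m) + q (F(m,r) + F(r,m)) + F(r,r)`, where the remainder terms range over
finitely many values. Since `q / n → 1 / m`, this yields `liminf F(n,n)/n² ≥ F(m,m)/m²` for every
`m`, and a sequence bounded above whose `liminf` dominates each of its terms converges to its
supremum.
-/

open Filter Topology Set

theorem tendsto_nhds_ciSup_of_forall_eventually_lt {ι α : Type*} [Nonempty ι]
    [ConditionallyCompleteLinearOrder α] [TopologicalSpace α] [OrderTopology α]
    {l : Filter ι} {u : ι → α} (hbdd : BddAbove (range u))
    (h : ∀ m, ∀ b < u m, ∀ᶠ n in l, b < u n) : Tendsto u l (𝓝 (⨆ n, u n)) := by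
  refine tendsto_order.2 ⟨fun b hb => ?_, fun b hb => ?_⟩
  · obtain ⟨m, hm⟩ := exists_lt_of_lt_ciSup hb
    exact h m b hm
  · exact Eventually.of_forall fun n => (le_ciSup hbdd n).trans_lt hb

theorem tendsto_nat_div_const_div_atTop (m : ℕ) :
    Tendsto (fun n : ℕ => ((n / m : ℕ) : ℝ) / n) atTop (𝓝 (m : ℝ)⁻¹) := by
  refine ((tendsto_nat_floor_mul_div_atTop (inv_nonneg.2 (Nat.cast_nonneg m))).comp
    tendsto_natCast_atTop_atTop).congr fun n => ?_
  simp [← div_eq_inv_mul, Nat.floor_div_eq_div]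

theorem nat_mul_add_le_of_superadditive {u : ℕ → ℝ} (hu : ∀ a b, u a + u b ≤ u (a + b))
    (q a r : ℕ) : q * u a + u r ≤ u (q * a + r) := by
  induction q with
  | zero => simp
  | succ q ih =>
    calc ((q + 1 : ℕ) : ℝ) * u a + u r = u a + (q * u a + u r) := by push_cast; ring
      _ ≤ u a + u (q * a + r) := by gcongr
      _ ≤ u ((q + 1) * a + r) := by
        convert hu a (q * a + r) using 2
        ring

theorem le_diag_mul_add {F : ℕ → ℕ → ℝ} (h₁ : ∀ a b n, F a n + F b n ≤ F (a + b) n)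
    (h₂ : ∀ m a b, F m a + F m b ≤ F m (a + b)) (q m r : ℕ) :
    q ^ 2 * F m m + q * (F m r + F r m) + F r r ≤ F (q * m + r) (q * m + r) := by
  have hn := nat_mul_add_le_of_superadditive (h₁ · · (q * m + r)) q m r
  have hm := nat_mul_add_le_of_superadditive (h₂ m) q m r
  have hr := nat_mul_add_le_of_superadditive (h₂ r) q m r
  have hq : (0 : ℝ) ≤ q := Nat.cast_nonneg q
  nlinarith [mul_le_mul_of_nonneg_left hm hq]

theorem eventually_lt_diag_div_sq {F : ℕ → ℕ → ℝ} (h₁ : ∀ a b n, F a n + F b n ≤ F (a + b) n)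
    (h₂ : ∀ m a b, F m a + F m b ≤ F m (a + b)) {m : ℕ} (hm : 0 < m) {c : ℝ}
    (hc : c < F m m / m ^ 2) : ∀ᶠ n : ℕ in atTop, c < F n n / n ^ 2 := by
  obtain ⟨k, hk⟩ : BddBelow ((fun r => min (F m r + F r m) (F r r)) '' Iio m) :=
    ((finite_Iio m).image _).bddBelow
  -- `(q² F(m,m) + q k + k) / n²` with `q = n / m`, as a polynomial in `q / n` and `1 / n`
  set L : ℕ → ℝ := fun n => F m m * (((n / m : ℕ) : ℝ) / n) ^ 2
    + k * (((n / m : ℕ) : ℝ) / n) * (n : ℝ)⁻¹ + k * ((n : ℝ)⁻¹) ^ 2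
  have hL : Tendsto L atTop (𝓝 (F m m / m ^ 2)) := by
    have hq := tendsto_nat_div_const_div_atTop m
    have hinv : Tendsto (fun n : ℕ => (n : ℝ)⁻¹) atTop (𝓝 0) := tendsto_inv_atTop_nhds_zero_nat
    convert ((hq.pow 2).const_mul (F m m)).add
      (((hq.const_mul k).mul hinv).add ((hinv.pow 2).const_mul k)) using 1
    · ext n
      simp only [L]
      ring
    · simp
      field_simp
  filter_upwards [hL.eventually (lt_mem_nhds hc), eventually_gt_atTop 0] with n hcL hn
  obtain ⟨hkr, hkrr⟩ := le_min_iff.1 (hk ⟨n % m, Nat.mod_lt n hm, rfl⟩)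
  have hdiag := le_diag_mul_add h₁ h₂ (n / m) m (n % m)
  rw [Nat.div_add_mod'] at hdiag
  have hq : (0 : ℝ) ≤ (n / m : ℕ) := Nat.cast_nonneg _
  have hLn : L n = (((n / m : ℕ) : ℝ) ^ 2 * F m m + (n / m : ℕ) * k + k) / n ^ 2 := by
    simp only [L]
    field_simp
  refine hcL.trans_le (hLn ▸ div_le_div_of_nonneg_right ?_ (by positivity))
  nlinarith [mul_le_mul_of_nonneg_left hkr hq]

def extendByZero (f : ℕ+ × ℕ+ → ℝ) (a b : ℕ) : ℝ :=
  if h : 0 < a ∧ 0 < b then f (⟨a, h.1⟩, ⟨b, h.2⟩) else 0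

@[simp]
theorem extendByZero_coe (f : ℕ+ × ℕ+ → ℝ) (m n : ℕ+) : extendByZero f m n = f (m, n) :=
  dif_pos ⟨m.pos, n.pos⟩

theorem extendByZero_comp_swap (f : ℕ+ × ℕ+ → ℝ) (a b : ℕ) :
    extendByZero (f ∘ Prod.swap) b a = extendByZero f a b := by
  by_cases ha : 0 < a <;> by_cases hb : 0 < b <;> simp [extendByZero, ha, hb]
  rfl

theorem extendByZero_add_fst_le {f : ℕ+ × ℕ+ → ℝ}
    (hf : ∀ m₁ m₂ n, f (m₁, n) + f (m₂, n) ≤ f (m₁ + m₂, n)) (a b n : ℕ) :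
    extendByZero f a n + extendByZero f b n ≤ extendByZero f (a + b) n := by
  rcases Nat.eq_zero_or_pos a with rfl | ha; · simp [extendByZero]
  rcases Nat.eq_zero_or_pos b with rfl | hb; · simp [extendByZero]
  rcases Nat.eq_zero_or_pos n with rfl | hn; · simp [extendByZero]
  lift a to ℕ+ using ha
  lift b to ℕ+ using hb
  lift n to ℕ+ using hn
  rw [← PNat.add_coe, extendByZero_coe, extendByZero_coe, extendByZero_coe]
  exact hf a b n

theorem extendByZero_add_snd_le {f : ℕ+ × ℕ+ → ℝ}
    (hf : ∀ m n₁ n₂, f (m, n₁) + f (m, n₂) ≤ f (m, n₁ + n₂)) (m a b : ℕ) :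
    extendByZero f m a + extendByZero f m b ≤ extendByZero f m (a + b) := by
  simpa only [extendByZero_comp_swap] using
    extendByZero_add_fst_le (f := f ∘ Prod.swap) (fun n₁ n₂ m => hf m n₁ n₂) a b m

theorem log_add_log_le_log_of_mul_le {x y z : ℝ} (hx : 0 < x) (hy : 0 < y) (h : x * y ≤ z) :
    Real.log x + Real.log y ≤ Real.log z := by
  rw [← Real.log_mul hx.ne' hy.ne']
  exact Real.log_le_log (mul_pos hx hy) h

/-- Supermultiplicative version of the two-variable Fekete lemma: if a positive
double sequence is supermultiplicative in each index and `D(n,n)^(1/n²)` is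
bounded above, then `lim D(n,n)^(1/n²)` exists and equals `sup D(n,n)^(1/n²)`. -/
theorem two_variable_fekete_supermultiplicative (D : ℕ+ × ℕ+ → ℝ)
    (hpos : ∀ m n : ℕ+, 0 < D (m, n))
    (hsup1 : ∀ m₁ m₂ n : ℕ+, D (m₁, n) * D (m₂, n) ≤ D (m₁ + m₂, n))
    (hsup2 : ∀ m n₁ n₂ : ℕ+, D (m, n₁) * D (m, n₂) ≤ D (m, n₁ + n₂))
    (hbdd : BddAbove (Set.range fun n : ℕ+ => D (n, n) ^ (((n : ℝ) ^ 2)⁻¹))) :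
    Filter.Tendsto (fun n : ℕ+ => D (n, n) ^ (((n : ℝ) ^ 2)⁻¹)) Filter.atTop
      (nhds (⨆ n : ℕ+, D (n, n) ^ (((n : ℝ) ^ 2)⁻¹))) := by
  set F := extendByZero fun p => Real.log (D p)
  have hF₁ : ∀ a b n, F a n + F b n ≤ F (a + b) n := extendByZero_add_fst_le fun _ _ _ =>
    log_add_log_le_log_of_mul_le (hpos _ _) (hpos _ _) (hsup1 _ _ _)
  have hF₂ : ∀ m a b, F m a + F m b ≤ F m (a + b) := extendByZero_add_snd_le fun _ _ _ =>
    log_add_log_le_log_of_mul_le (hpos _ _) (hpos _ _) (hsup2 _ _ _)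
  have hexp : ∀ n : ℕ+, D (n, n) ^ (((n : ℝ) ^ 2)⁻¹) = Real.exp (F n n / (n : ℝ) ^ 2) := by
    intro n
    rw [Real.rpow_def_of_pos (hpos n n), div_eq_mul_inv]
    simp only [F, extendByZero_coe]
  refine tendsto_nhds_ciSup_of_forall_eventually_lt hbdd fun m b hb => ?_
  rcases le_or_gt b 0 with hb0 | hb0
  · exact Eventually.of_forall fun n => hb0.trans_lt (Real.rpow_pos_of_pos (hpos n n) _)
  rw [hexp, ← Real.log_lt_iff_lt_exp hb0] at hb
  filter_upwards [tendsto_PNat_val_atTop_atTop.eventually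
    (eventually_lt_diag_div_sq hF₁ hF₂ m.pos hb)] with n hn
  rw [hexp, ← Real.log_lt_iff_lt_exp hb0]
  exact hn
end

section
/- The number of knot (2,n)-mosaics is D_{2,n} = 2^{n−1}: equivalently, the number of 2×n arrays of the 11 mosaic tiles that are suitably connected with no connection point on the boundary equals 2^{n−1}. -/
/-- The 11 mosaic tiles: the blank tile, four arcs, two straight lines,
two double arcs and two crossings. -/
inductive Tile
  | blank | arcLT | arcTR | arcRB | arcBL | lineLR | lineTB
  | doubleArc1 | doubleArc2 | cross1 | cross2
  deriving DecidableEq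

instance instFintypeTile : Fintype Tile :=
  ⟨{Tile.blank, Tile.arcLT, Tile.arcTR, Tile.arcRB, Tile.arcBL, Tile.lineLR, Tile.lineTB,
    Tile.doubleArc1, Tile.doubleArc2, Tile.cross1, Tile.cross2}, fun x => by cases x <;> simp⟩

namespace Tile

/-- Whether a tile has a connection point on its left edge. -/
def cpL : Tile → Bool
  | blank => false | arcLT => true | arcTR => false | arcRB => false
  | arcBL => true | lineLR => true | lineTB => false
  | doubleArc1 => true | doubleArc2 => true | cross1 => true | cross2 => true

/-- Whether a tile has a connection point on its right edge. -/
def cpR : Tile → Bool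
  | blank => false | arcLT => false | arcTR => true | arcRB => true
  | arcBL => false | lineLR => true | lineTB => false
  | doubleArc1 => true | doubleArc2 => true | cross1 => true | cross2 => true

/-- Whether a tile has a connection point on its top edge. -/
def cpT : Tile → Bool
  | blank => false | arcLT => true | arcTR => true | arcRB => false
  | arcBL => false | lineLR => false | lineTB => true
  | doubleArc1 => true | doubleArc2 => true | cross1 => true | cross2 => true

/-- Whether a tile has a connection point on its bottom edge. -/
def cpB : Tile → Bool
  | blank => false | arcLT => false | arcTR => false | arcRB => true
  | arcBL => true | lineLR => false | lineTB => true
  | doubleArc1 => true | doubleArc2 => true | cross1 => true | cross2 => true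

end Tile

/-- A `2 × n` array of mosaic tiles is a knot `(2,n)`-mosaic if it is suitably
connected (adjacent tiles agree on connection points along their common edge)
and has no connection point on the boundary. -/
def IsKnotMosaic (n : ℕ) (M : Fin 2 → Fin n → Tile) : Prop :=
  (∀ i : Fin 2, ∀ j : Fin n, (j : ℕ) = 0 → (M i j).cpL = false) ∧
  (∀ i : Fin 2, ∀ j : Fin n, (j : ℕ) = n - 1 → (M i j).cpR = false) ∧
  (∀ j : Fin n, (M 0 j).cpT = false) ∧
  (∀ j : Fin n, (M 1 j).cpB = false) ∧
  (∀ i : Fin 2, ∀ j j' : Fin n, (j' : ℕ) = (j : ℕ) + 1 → (M i j).cpR = (M i j').cpL) ∧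
  (∀ j : Fin n, (M 0 j).cpB = (M 1 j).cpT)

instance (n : ℕ) : DecidablePred (IsKnotMosaic n) := fun M => by
  unfold IsKnotMosaic; infer_instance

/-!
A tile of the top row has no connection point on its top edge, so it is determined by its left and
right connection points, and it has one on its bottom edge exactly when these differ; symmetrically
for the bottom row. Matching along the middle line therefore forces each column's right bits to
agree once its left bits do, and since both rows start with no left connection point, the two rows
carry the same horizontal bits throughout. A knot `(2,n)`-mosaic is thus the same thing as a choice
of bits on the `n - 1` interior vertical lines.
-/

namespace Tile

def topRowTile : Bool → Bool → Tile
  | false, false => blank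
  | false, true => arcRB
  | true, false => arcBL
  | true, true => lineLR

def bottomRowTile : Bool → Bool → Tile
  | false, false => blank
  | false, true => arcTR
  | true, false => arcLT
  | true, true => lineLR

section
variable (l r : Bool)

@[simp] lemma cpL_topRowTile : (topRowTile l r).cpL = l := by cases l <;> cases r <;> rfl
@[simp] lemma cpR_topRowTile : (topRowTile l r).cpR = r := by cases l <;> cases r <;> rfl
@[simp] lemma cpT_topRowTile : (topRowTile l r).cpT = false := by cases l <;> cases r <;> rfl
@[simp] lemma cpB_topRowTile : (topRowTile l r).cpB = xor l r := by cases l <;> cases r <;> rfl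
@[simp] lemma cpL_bottomRowTile : (bottomRowTile l r).cpL = l := by cases l <;> cases r <;> rfl
@[simp] lemma cpR_bottomRowTile : (bottomRowTile l r).cpR = r := by cases l <;> cases r <;> rfl
@[simp] lemma cpT_bottomRowTile : (bottomRowTile l r).cpT = xor l r := by
  cases l <;> cases r <;> rfl
@[simp] lemma cpB_bottomRowTile : (bottomRowTile l r).cpB = false := by
  cases l <;> cases r <;> rfl

end

lemma eq_topRowTile_of_cpT_eq_false : ∀ t : Tile, t.cpT = false → t = topRowTile t.cpL t.cpR := by
  decide

lemma eq_bottomRowTile_of_cpB_eq_false :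
    ∀ t : Tile, t.cpB = false → t = bottomRowTile t.cpL t.cpR := by
  decide

lemma cpR_eq_of_cpL_eq_of_stacked {t b : Tile} (ht : t.cpT = false) (hb : b.cpB = false)
    (hv : t.cpB = b.cpT) (hl : t.cpL = b.cpL) : t.cpR = b.cpR := by
  rw [eq_topRowTile_of_cpT_eq_false t ht, eq_bottomRowTile_of_cpB_eq_false b hb] at hv
  simp only [cpB_topRowTile, cpT_bottomRowTile, hl] at hv
  exact Bool.xor_right_inj.mp hv

end Tile

namespace IsKnotMosaic

variable {n : ℕ} {M : Fin 2 → Fin n → Tile}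

theorem rows_agree (hM : IsKnotMosaic n M) (j : Fin n) :
    (M 0 j).cpL = (M 1 j).cpL ∧ (M 0 j).cpR = (M 1 j).cpR := by
  obtain ⟨hL, -, hT, hB, hH, hV⟩ := hM
  have column (j : Fin n) (hl : (M 0 j).cpL = (M 1 j).cpL) : (M 0 j).cpR = (M 1 j).cpR :=
    Tile.cpR_eq_of_cpL_eq_of_stacked (hT j) (hB j) (hV j) hl
  suffices left : ∀ k (hk : k < n), (M 0 ⟨k, hk⟩).cpL = (M 1 ⟨k, hk⟩).cpL from
    ⟨left j j.2, column j (left j j.2)⟩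
  intro k
  induction k with
  | zero => intro hk; rw [hL 0 _ rfl, hL 1 _ rfl]
  | succ k ih =>
    intro hk
    rw [← hH 0 ⟨k, by omega⟩ _ rfl, ← hH 1 ⟨k, by omega⟩ _ rfl]
    exact column _ (ih _)

theorem top_eq (hM : IsKnotMosaic n M) (j : Fin n) :
    M 0 j = Tile.topRowTile (M 0 j).cpL (M 0 j).cpR :=
  Tile.eq_topRowTile_of_cpT_eq_false _ (hM.2.2.1 j)

theorem bottom_eq (hM : IsKnotMosaic n M) (j : Fin n) :
    M 1 j = Tile.bottomRowTile (M 0 j).cpL (M 0 j).cpR := by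
  obtain ⟨hl, hr⟩ := hM.rows_agree j
  rw [hl, hr]
  exact Tile.eq_bottomRowTile_of_cpB_eq_false _ (hM.2.2.2.1 j)

end IsKnotMosaic

section EdgeBits

variable {n : ℕ}

/-- The connection bit on the vertical grid line `k` (`0 ≤ k ≤ n`) of a mosaic whose bits on the
interior lines `1, …, n - 1` are `g 0, …, g (n - 2)`. -/
def edgeBit (g : Fin (n - 1) → Bool) (k : ℕ) : Bool :=
  if h : 0 < k ∧ k < n then g ⟨k - 1, by omega⟩ else false

@[simp] lemma edgeBit_zero (g : Fin (n - 1) → Bool) : edgeBit g 0 = false := rfl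

lemma edgeBit_of_le (g : Fin (n - 1) → Bool) {k : ℕ} (hk : n ≤ k) : edgeBit g k = false := by
  simp [edgeBit, Nat.not_lt.mpr hk]

def mosaicOfEdgeBits (g : Fin (n - 1) → Bool) : Fin 2 → Fin n → Tile := fun i j =>
  if i = 0 then Tile.topRowTile (edgeBit g j) (edgeBit g (j + 1))
  else Tile.bottomRowTile (edgeBit g j) (edgeBit g (j + 1))

def edgeBitsOf (M : Fin 2 → Fin n → Tile) (k : Fin (n - 1)) : Bool :=
  (M 0 (Fin.castLE (Nat.sub_le n 1) k)).cpR

lemma isKnotMosaic_mosaicOfEdgeBits (g : Fin (n - 1) → Bool) :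
    IsKnotMosaic n (mosaicOfEdgeBits g) := by
  refine ⟨fun i j hj => ?_, fun i j hj => ?_, fun j => ?_, fun j => ?_, fun i j j' hj => ?_,
    fun j => ?_⟩
  · by_cases hi : i = 0 <;> simp [mosaicOfEdgeBits, hi, hj]
  · have hn : n ≤ j + 1 := by omega
    by_cases hi : i = 0 <;> simp [mosaicOfEdgeBits, hi, edgeBit_of_le g hn]
  · simp [mosaicOfEdgeBits]
  · simp [mosaicOfEdgeBits]
  · by_cases hi : i = 0 <;> simp [mosaicOfEdgeBits, hi, hj]
  · simp [mosaicOfEdgeBits]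

lemma edgeBit_edgeBitsOf_succ {M : Fin 2 → Fin n → Tile} (hM : IsKnotMosaic n M) (j : Fin n) :
    edgeBit (edgeBitsOf M) (j + 1) = (M 0 j).cpR := by
  by_cases hj : (j : ℕ) + 1 < n
  · simp [edgeBit, edgeBitsOf, hj]
  · rw [edgeBit_of_le _ (by omega), hM.2.1 0 j (by omega)]

lemma edgeBit_edgeBitsOf {M : Fin 2 → Fin n → Tile} (hM : IsKnotMosaic n M) (j : Fin n) :
    edgeBit (edgeBitsOf M) j = (M 0 j).cpL := by
  by_cases hj : (j : ℕ) = 0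
  · rw [hj, edgeBit_zero, hM.1 0 j hj]
  · have hj' : (j : ℕ) = (j - 1) + 1 := by omega
    have hk : (j : ℕ) - 1 < n := by omega
    rw [hj', edgeBit_edgeBitsOf_succ hM ⟨_, hk⟩, hM.2.2.2.2.1 0 ⟨_, hk⟩ j hj']

def knotMosaicEquiv (n : ℕ) :
    (Fin (n - 1) → Bool) ≃ {M : Fin 2 → Fin n → Tile // IsKnotMosaic n M} where
  toFun g := ⟨mosaicOfEdgeBits g, isKnotMosaic_mosaicOfEdgeBits g⟩
  invFun M := edgeBitsOf M.1
  left_inv g := by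
    funext k
    simp [edgeBitsOf, mosaicOfEdgeBits, edgeBit, show (k : ℕ) + 1 < n by omega]
  right_inv := by
    rintro ⟨M, hM⟩
    ext i j
    fin_cases i
    · simpa [mosaicOfEdgeBits, edgeBit_edgeBitsOf hM, edgeBit_edgeBitsOf_succ hM] using
        (hM.top_eq j).symm
    · simpa [mosaicOfEdgeBits, edgeBit_edgeBitsOf hM, edgeBit_edgeBitsOf_succ hM] using
        (hM.bottom_eq j).symm

end EdgeBits

theorem knot_two_row_mosaics_general (n : ℕ) :
    Fintype.card {M : Fin 2 → Fin n → Tile // IsKnotMosaic n M} = 2 ^ (n - 1) := by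
  rw [← Fintype.card_congr (knotMosaicEquiv n)]
  simp

/-- The number of knot `(2,n)`-mosaics is `2^(n-1)`. -/
theorem knot_two_row_mosaics (n : ℕ) (hn : 1 ≤ n) :
    Fintype.card {M : Fin 2 → Fin n → Tile // IsKnotMosaic n M} = 2 ^ (n - 1) :=
  knot_two_row_mosaics_general n
end
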